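/- Let g : ℝᵈ → ℝ be K-Lipschitz, Z ∼ ρ, X₁ ∼ ρ*_σ, Y ∼ ρ* any coupling, p = P(g(Z) ≤ 0) > 0, p_σ = E[F_σ(Z)]. If E[g(X₁)²] < ∞, then for N i.i.d. samples Xᵢ ∼ ρ*_σ, (1/p)·E[|(1/N)Σᵢ 1_{g(Xᵢ)≤0} ρ(Xᵢ)/ρ*_σ(Xᵢ) − p|²]^{1/2} ≤ (6/(√N p))·(e^{-μ/σ} + P(0 < g(Z) < 2μ) + (e^{-2μ/σ}/σ²)·E[|g(X₁) − g(Y)|² 1_{g(X₁)≤0}])^{1/2}. -/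

import Mathlib

open MeasureTheory ProbabilityTheory

noncomputable def gaussD (d : ℕ) (x : EuclideanSpace ℝ (Fin d)) : ℝ :=
  (2 * Real.pi) ^ (-(d : ℝ) / 2) * Real.exp (-‖x‖ ^ 2 / 2)

noncomputable def Fsig {E : Type*} (g : E → ℝ) (σ μ : ℝ) (x : E) : ℝ :=
  (1 + Real.exp ((-μ + g x) / σ))⁻¹

/-! The estimator averages `N` independent copies of the importance weight
`w = 1_{g ≤ 0} ρ / ρ*_σ = 1_{g ≤ 0} pσ / F_σ`, whose mean under `ρ*_σ` is `p`, so its mean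
square error is `Var[w] / N`. With `e = exp (-μ/σ)` and `q = P(0 < g(Z) < 2μ)`:
on `{g ≤ 0}` one has `1 / F_σ ≤ 1 + e`, hence `E[w²] = pσ ∫_{g ≤ 0} ρ / F_σ ≤ pσ (1 + e) p`;
off `{g ≤ 0}`, `F_σ ≤ 1` on the band `0 < g < 2μ` and `F_σ ≤ e` beyond it, hence
`pσ ≤ p + q + e`. So `Var[w] ≤ p (pσ - p) + e pσ p ≤ 2e + q`, which is already below the
bound since its coupling term is nonnegative. -/

lemma gaussD_pos (d : ℕ) (x : EuclideanSpace ℝ (Fin d)) : 0 < gaussD d x := by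
  unfold gaussD; positivity

lemma measurable_gaussD (d : ℕ) : Measurable (gaussD d) := by
  unfold gaussD; fun_prop

section Fsig

variable {E : Type*} {g : E → ℝ} {σ μ : ℝ} {x : E}

lemma Fsig_pos : 0 < Fsig g σ μ x := by
  unfold Fsig; positivity

lemma Fsig_le_one : Fsig g σ μ x ≤ 1 :=
  inv_le_one_of_one_le₀ (le_add_of_nonneg_right (Real.exp_pos _).le)

lemma measurable_Fsig [MeasurableSpace E] (hg : Measurable g) : Measurable (Fsig g σ μ) := by
  unfold Fsig; fun_prop

lemma inv_Fsig_le (hσ : 0 < σ) (hx : g x ≤ 0) :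
    (Fsig g σ μ x)⁻¹ ≤ 1 + Real.exp (-μ / σ) := by
  rw [Fsig, inv_inv]
  gcongr
  linarith

lemma Fsig_le_exp (hσ : 0 < σ) (hx : 2 * μ ≤ g x) : Fsig g σ μ x ≤ Real.exp (-μ / σ) := by
  calc Fsig g σ μ x ≤ (Real.exp ((-μ + g x) / σ))⁻¹ :=
        inv_anti₀ (Real.exp_pos _) (le_add_of_nonneg_left zero_le_one)
    _ = Real.exp (-((-μ + g x) / σ)) := (Real.exp_neg _).symm
    _ ≤ Real.exp (-μ / σ) := by
        rw [← neg_div]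
        gcongr
        linarith

lemma Fsig_mul_le_indicator (hσ : 0 < σ) {ρ : E → ℝ} (hρ : 0 ≤ ρ x) :
    Fsig g σ μ x * ρ x ≤ {y | g y ≤ 0}.indicator ρ x
      + {y | 0 < g y ∧ g y < 2 * μ}.indicator ρ x + Real.exp (-μ / σ) * ρ x := by
  have hF : Fsig g σ μ x * ρ x ≤ ρ x := mul_le_of_le_one_left hρ Fsig_le_one
  have he : 0 ≤ Real.exp (-μ / σ) * ρ x := by positivity
  simp only [Set.indicator_apply, Set.mem_ofPred_eq]
  rcases le_or_gt (g x) 0 with hA | hA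
  · simp only [if_pos hA]
    split_ifs <;> linarith
  rcases lt_or_ge (g x) (2 * μ) with hB | hB
  · simp only [if_neg (not_le.mpr hA), if_pos (And.intro hA hB)]
    linarith
  · simp only [if_neg (not_le.mpr hA), if_neg (fun h : 0 < g x ∧ g x < 2 * μ => hB.not_gt h.2)]
    linarith [mul_le_mul_of_nonneg_right (Fsig_le_exp hσ hB) hρ]

end Fsig

section Density

variable {E Ω : Type*} [MeasurableSpace E] [MeasurableSpace Ω] {ν : Measure E} {P : Measure Ω}
  {X : Ω → E} {f : E → ℝ}

lemma integral_comp_eq_integral_mul (hX : AEMeasurable X P) (hf : Measurable f)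
    (hf0 : ∀ x, 0 ≤ f x) (hlaw : P.map X = ν.withDensity fun x => ENNReal.ofReal (f x))
    {h : E → ℝ} (hh : Measurable h) :
    ∫ ω, h (X ω) ∂P = ∫ x, f x * h x ∂ν := by
  rw [← integral_map hX hh.aestronglyMeasurable, hlaw,
    integral_withDensity_eq_integral_toReal_smul hf.ennreal_ofReal
      (ae_of_all _ fun _ => ENNReal.ofReal_lt_top)]
  simp only [ENNReal.toReal_ofReal (hf0 _), smul_eq_mul]

lemma integral_eq_one_of_map_eq_withDensity [IsProbabilityMeasure P] (hX : AEMeasurable X P)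
    (hf : Measurable f) (hf0 : ∀ x, 0 ≤ f x)
    (hlaw : P.map X = ν.withDensity fun x => ENNReal.ofReal (f x)) :
    ∫ x, f x ∂ν = 1 := by
  simpa using (integral_comp_eq_integral_mul hX hf hf0 hlaw measurable_const (h := 1)).symm

lemma measureReal_preimage_eq_setIntegral (hX : Measurable X) (hf : Measurable f)
    (hf0 : ∀ x, 0 ≤ f x) (hlaw : P.map X = ν.withDensity fun x => ENNReal.ofReal (f x))
    {s : Set E} (hs : MeasurableSet s) :
    P.real (X ⁻¹' s) = ∫ x in s, f x ∂ν := by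
  calc P.real (X ⁻¹' s) = ∫ ω, s.indicator 1 (X ω) ∂P := (integral_indicator_one (hX hs)).symm
    _ = ∫ x, f x * s.indicator 1 x ∂ν :=
        integral_comp_eq_integral_mul hX.aemeasurable hf hf0 hlaw (measurable_one.indicator hs)
    _ = ∫ x in s, f x ∂ν := by
        rw [← integral_indicator hs]
        congr 1 with x
        by_cases hx : x ∈ s <;> simp [hx]

end Density

/-- The paper's `ρ*_σ = F_σ ρ / p_σ`, with the normalizer `pσ` kept as a parameter. -/
noncomputable def smoothedDensity {E : Type*} (ρ g : E → ℝ) (σ μ pσ : ℝ) (x : E) : ℝ :=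
  Fsig g σ μ x * ρ x / pσ

noncomputable def importanceWeight {E : Type*} (ρ g : E → ℝ) (σ μ pσ : ℝ) (x : E) : ℝ :=
  if g x ≤ 0 then ρ x / smoothedDensity ρ g σ μ pσ x else 0

section ImportanceWeight

variable {E : Type*} {ρ g : E → ℝ} {σ μ pσ : ℝ} {x : E}

lemma smoothedDensity_nonneg (hρ : 0 ≤ ρ x) (hpσ : 0 ≤ pσ) :
    0 ≤ smoothedDensity ρ g σ μ pσ x :=
  div_nonneg (mul_nonneg Fsig_pos.le hρ) hpσ

lemma smoothedDensity_pos (hρ : 0 < ρ x) (hpσ : 0 < pσ) : 0 < smoothedDensity ρ g σ μ pσ x :=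
  div_pos (mul_pos Fsig_pos hρ) hpσ

lemma importanceWeight_of_nonpos (hρ : 0 < ρ x) (hpσ : 0 < pσ) (hx : g x ≤ 0) :
    importanceWeight ρ g σ μ pσ x = pσ * (Fsig g σ μ x)⁻¹ := by
  have := (Fsig_pos (g := g) (σ := σ) (μ := μ) (x := x)).ne'
  rw [importanceWeight, if_pos hx, smoothedDensity]
  field_simp

lemma importanceWeight_nonneg (hρ : 0 ≤ ρ x) (hpσ : 0 ≤ pσ) :
    0 ≤ importanceWeight ρ g σ μ pσ x := by
  unfold importanceWeight
  split_ifs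
  exacts [div_nonneg hρ (smoothedDensity_nonneg hρ hpσ), le_rfl]

lemma importanceWeight_le (hσ : 0 < σ) (hρ : 0 < ρ x) (hpσ : 0 < pσ) :
    importanceWeight ρ g σ μ pσ x ≤ pσ * (1 + Real.exp (-μ / σ)) := by
  by_cases hx : g x ≤ 0
  · rw [importanceWeight_of_nonpos hρ hpσ hx]
    gcongr
    exact inv_Fsig_le hσ hx
  · rw [importanceWeight, if_neg hx]
    positivity

lemma smoothedDensity_mul_importanceWeight (hρ : 0 < ρ x) (hpσ : 0 < pσ) :
    smoothedDensity ρ g σ μ pσ x * importanceWeight ρ g σ μ pσ x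
      = {y | g y ≤ 0}.indicator ρ x := by
  unfold importanceWeight
  split_ifs with hx
  · rw [Set.indicator_of_mem (show x ∈ {y | g y ≤ 0} from hx),
      mul_div_cancel₀ _ (smoothedDensity_pos hρ hpσ).ne']
  · rw [Set.indicator_of_notMem (show x ∉ {y | g y ≤ 0} from hx), mul_zero]

lemma smoothedDensity_mul_importanceWeight_sq_le (hσ : 0 < σ) (hρ : 0 < ρ x) (hpσ : 0 < pσ) :
    smoothedDensity ρ g σ μ pσ x * importanceWeight ρ g σ μ pσ x ^ 2
      ≤ pσ * (1 + Real.exp (-μ / σ)) * {y | g y ≤ 0}.indicator ρ x := by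
  rw [sq, ← mul_assoc, smoothedDensity_mul_importanceWeight hρ hpσ, mul_comm]
  exact mul_le_mul_of_nonneg_right (importanceWeight_le hσ hρ hpσ)
    (Set.indicator_apply_nonneg fun _ => hρ.le)

variable [MeasurableSpace E]

lemma measurable_smoothedDensity (hρ : Measurable ρ) (hg : Measurable g) :
    Measurable (smoothedDensity ρ g σ μ pσ) :=
  ((measurable_Fsig hg).mul hρ).div_const pσ

lemma measurable_importanceWeight (hρ : Measurable ρ) (hg : Measurable g) :
    Measurable (importanceWeight ρ g σ μ pσ) :=
  Measurable.ite (measurableSet_le hg measurable_const)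
    (hρ.div (measurable_smoothedDensity hρ hg)) measurable_const

end ImportanceWeight

section Integrals

variable {E : Type*} [MeasurableSpace E] {ν : Measure E} {ρ g : E → ℝ} {σ μ pσ : ℝ}

lemma integral_Fsig_mul_le (hg : Measurable g) (hσ : 0 < σ) (hρ : ∀ x, 0 ≤ ρ x)
    (hρint : Integrable ρ ν) :
    ∫ x, Fsig g σ μ x * ρ x ∂ν ≤ ∫ x in {x | g x ≤ 0}, ρ x ∂ν
      + ∫ x in {x | 0 < g x ∧ g x < 2 * μ}, ρ x ∂ν + Real.exp (-μ / σ) * ∫ x, ρ x ∂ν := by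
  have hA : MeasurableSet {x | g x ≤ 0} := measurableSet_le hg measurable_const
  have hB : MeasurableSet {x | 0 < g x ∧ g x < 2 * μ} :=
    (measurableSet_lt measurable_const hg).inter (measurableSet_lt hg measurable_const)
  have hAi := hρint.indicator hA
  have hBi := hρint.indicator hB
  calc ∫ x, Fsig g σ μ x * ρ x ∂ν
      ≤ ∫ x, ({x | g x ≤ 0}.indicator ρ x + {x | 0 < g x ∧ g x < 2 * μ}.indicator ρ x
          + Real.exp (-μ / σ) * ρ x) ∂ν :=
        integral_mono_of_nonneg (ae_of_all _ fun x => mul_nonneg Fsig_pos.le (hρ x))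
          ((hAi.add hBi).add (hρint.const_mul _))
          (ae_of_all _ fun x => Fsig_mul_le_indicator hσ (hρ x))
    _ = _ := by
        rw [integral_add ?_ (hρint.const_mul _), integral_add hAi hBi,
          integral_indicator hA, integral_indicator hB, integral_const_mul]
        exact hAi.add hBi

lemma integral_smoothedDensity_mul_importanceWeight (hg : Measurable g) (hρ : ∀ x, 0 < ρ x)
    (hpσ : 0 < pσ) :
    ∫ x, smoothedDensity ρ g σ μ pσ x * importanceWeight ρ g σ μ pσ x ∂ν
      = ∫ x in {x | g x ≤ 0}, ρ x ∂ν := by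
  simp_rw [smoothedDensity_mul_importanceWeight (hρ _) hpσ]
  exact integral_indicator (measurableSet_le hg measurable_const)

lemma integral_smoothedDensity_mul_importanceWeight_sq_le (hg : Measurable g) (hσ : 0 < σ)
    (hρ : ∀ x, 0 < ρ x) (hρint : Integrable ρ ν) (hpσ : 0 < pσ) :
    ∫ x, smoothedDensity ρ g σ μ pσ x * importanceWeight ρ g σ μ pσ x ^ 2 ∂ν
      ≤ pσ * (1 + Real.exp (-μ / σ)) * ∫ x in {x | g x ≤ 0}, ρ x ∂ν := by
  have hA : MeasurableSet {x | g x ≤ 0} := measurableSet_le hg measurable_const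
  rw [← integral_indicator hA, ← integral_const_mul]
  exact integral_mono_of_nonneg
    (ae_of_all _ fun x => mul_nonneg (smoothedDensity_nonneg (hρ x).le hpσ.le) (sq_nonneg _))
    ((hρint.indicator hA).const_mul _)
    (ae_of_all _ fun x => smoothedDensity_mul_importanceWeight_sq_le hσ (hρ x) hpσ)

end Integrals

section Sampling

variable {E Ω : Type*} [MeasurableSpace E] [MeasurableSpace Ω] {ν : Measure E} {P : Measure Ω}
  {X : Ω → E} {ρ g : E → ℝ} {σ μ pσ : ℝ}

/-- With `pσ = 0` the density `ρ*_σ` would vanish identically (`x / 0 = 0`), which no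
probability law has. -/
lemma pos_of_map_eq_withDensity_smoothedDensity [IsProbabilityMeasure P] (hX : AEMeasurable X P)
    (hg : Measurable g) (hρ : Measurable ρ) (hρ0 : ∀ x, 0 ≤ ρ x)
    (hpσ : pσ = ∫ x, Fsig g σ μ x * ρ x ∂ν)
    (hlaw : P.map X = ν.withDensity fun x => ENNReal.ofReal (smoothedDensity ρ g σ μ pσ x)) :
    0 < pσ := by
  have hpσ0 : 0 ≤ pσ := hpσ ▸ integral_nonneg fun x => mul_nonneg Fsig_pos.le (hρ0 x)
  have h1 := integral_eq_one_of_map_eq_withDensity hX (measurable_smoothedDensity hρ hg)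
    (fun x => smoothedDensity_nonneg (hρ0 x) hpσ0) hlaw
  refine hpσ0.lt_of_ne fun h => ?_
  simp [smoothedDensity, ← h] at h1

lemma memLp_importanceWeight_comp [IsFiniteMeasure P] (hX : Measurable X) (hg : Measurable g)
    (hρ : Measurable ρ) (hρpos : ∀ x, 0 < ρ x) (hσ : 0 < σ) (hpσ : 0 < pσ) :
    MemLp (fun ω => importanceWeight ρ g σ μ pσ (X ω)) 2 P :=
  MemLp.of_bound ((measurable_importanceWeight hρ hg).comp hX).aestronglyMeasurable _
    (ae_of_all _ fun ω => by
      rw [Real.norm_of_nonneg (importanceWeight_nonneg (hρpos _).le hpσ.le)]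
      exact importanceWeight_le hσ (hρpos _) hpσ)

lemma integral_importanceWeight_comp (hX : Measurable X) (hg : Measurable g) (hρ : Measurable ρ)
    (hρpos : ∀ x, 0 < ρ x) (hpσ : 0 < pσ)
    (hlaw : P.map X = ν.withDensity fun x => ENNReal.ofReal (smoothedDensity ρ g σ μ pσ x)) :
    ∫ ω, importanceWeight ρ g σ μ pσ (X ω) ∂P = ∫ x in {x | g x ≤ 0}, ρ x ∂ν := by
  rw [integral_comp_eq_integral_mul hX.aemeasurable (measurable_smoothedDensity hρ hg)
    (fun x => smoothedDensity_nonneg (hρpos x).le hpσ.le) hlaw (measurable_importanceWeight hρ hg)]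
  exact integral_smoothedDensity_mul_importanceWeight hg hρpos hpσ

lemma variance_importanceWeight_comp_le [IsProbabilityMeasure P] (hX : Measurable X)
    (hg : Measurable g) (hρ : Measurable ρ) (hρpos : ∀ x, 0 < ρ x) (hρ1 : ∫ x, ρ x ∂ν = 1)
    (hσ : 0 < σ) (hpσ : pσ = ∫ x, Fsig g σ μ x * ρ x ∂ν)
    (hlaw : P.map X = ν.withDensity fun x => ENNReal.ofReal (smoothedDensity ρ g σ μ pσ x)) :
    Var[fun ω => importanceWeight ρ g σ μ pσ (X ω); P]
      ≤ 2 * Real.exp (-μ / σ) + ∫ x in {x | 0 < g x ∧ g x < 2 * μ}, ρ x ∂ν := by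
  have hρint : Integrable ρ ν := .of_integral_ne_zero (by rw [hρ1]; exact one_ne_zero)
  have hpσpos := pos_of_map_eq_withDensity_smoothedDensity hX.aemeasurable hg hρ
    (fun x => (hρpos x).le) hpσ hlaw
  have hpσ1 : pσ ≤ 1 := hpσ ▸ hρ1 ▸ integral_mono_of_nonneg
    (ae_of_all _ fun x => mul_nonneg Fsig_pos.le (hρpos x).le) hρint
    (ae_of_all _ fun x => mul_le_of_le_one_left (hρpos x).le Fsig_le_one)
  have hpσ_le : pσ ≤ ∫ x in {x | g x ≤ 0}, ρ x ∂ν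
      + ∫ x in {x | 0 < g x ∧ g x < 2 * μ}, ρ x ∂ν + Real.exp (-μ / σ) := by
    simpa only [hρ1, mul_one, ← hpσ] using
      integral_Fsig_mul_le hg hσ (fun x => (hρpos x).le) hρint (μ := μ)
  have hp0 : 0 ≤ ∫ x in {x | g x ≤ 0}, ρ x ∂ν := setIntegral_nonneg
    (measurableSet_le hg measurable_const) fun x _ => (hρpos x).le
  have hp1 : ∫ x in {x | g x ≤ 0}, ρ x ∂ν ≤ 1 :=
    hρ1 ▸ setIntegral_le_integral hρint (ae_of_all _ fun x => (hρpos x).le)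
  have hq0 : 0 ≤ ∫ x in {x | 0 < g x ∧ g x < 2 * μ}, ρ x ∂ν :=
    integral_nonneg fun x => (hρpos x).le
  have hsecond : ∫ ω, importanceWeight ρ g σ μ pσ (X ω) ^ 2 ∂P
      ≤ pσ * (1 + Real.exp (-μ / σ)) * ∫ x in {x | g x ≤ 0}, ρ x ∂ν := by
    rw [integral_comp_eq_integral_mul hX.aemeasurable (measurable_smoothedDensity hρ hg)
      (fun x => smoothedDensity_nonneg (hρpos x).le hpσpos.le) hlaw
      ((measurable_importanceWeight hρ hg).pow_const 2)]
    exact integral_smoothedDensity_mul_importanceWeight_sq_le hg hσ hρpos hρint hpσpos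
  rw [variance_eq_sub (memLp_importanceWeight_comp hX hg hρ hρpos hσ hpσpos),
    integral_importanceWeight_comp hX hg hρ hρpos hpσpos hlaw]
  simp only [Pi.pow_apply]
  have he := Real.exp_pos (-μ / σ)
  nlinarith [mul_le_mul_of_nonneg_left hpσ_le hp0, mul_le_mul_of_nonneg_left hp1 hpσpos.le,
    mul_nonneg hp0 hq0]

end Sampling

lemma integral_sq_mean_sub_le {Ω ι : Type*} [MeasurableSpace Ω] {P : Measure Ω}
    [IsProbabilityMeasure P] [Fintype ι] [Nonempty ι] {Y : ι → Ω → ℝ}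
    (hY : ∀ i, MemLp (Y i) 2 P) (hindep : Pairwise fun i j => Y i ⟂ᵢ[P] Y j) {m v : ℝ}
    (hm : ∀ i, P[Y i] = m) (hv : ∀ i, Var[Y i; P] ≤ v) :
    ∫ ω, ((Fintype.card ι : ℝ)⁻¹ * ∑ i, Y i ω - m) ^ 2 ∂P ≤ v / Fintype.card ι := by
  have hn : (0 : ℝ) < Fintype.card ι := Nat.cast_pos.mpr Fintype.card_pos
  have hsum : MemLp (∑ i, Y i) 2 P := memLp_finsetSum' _ fun i _ => hY i
  have hmean : P[fun ω => (Fintype.card ι : ℝ)⁻¹ * (∑ i, Y i) ω] = m := by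
    simp only [Finset.sum_apply]
    rw [integral_const_mul, integral_finsetSum _ fun i _ => (hY i).integrable one_le_two]
    simp only [hm, Finset.sum_const, Finset.card_univ, nsmul_eq_mul]
    field_simp
  have hvar : Var[∑ i, Y i; P] ≤ Fintype.card ι * v := by
    rw [IndepFun.variance_sum (fun i _ => hY i) fun i _ j _ hij => hindep hij]
    simpa using Finset.sum_le_sum fun i (_ : i ∈ Finset.univ) => hv i
  calc ∫ ω, ((Fintype.card ι : ℝ)⁻¹ * ∑ i, Y i ω - m) ^ 2 ∂P
      = Var[fun ω => (Fintype.card ι : ℝ)⁻¹ * (∑ i, Y i) ω; P] := by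
        rw [variance_eq_integral (hsum.aemeasurable.const_mul _), hmean]
        simp only [Finset.sum_apply]
    _ = (Fintype.card ι : ℝ)⁻¹ ^ 2 * Var[∑ i, Y i; P] := variance_const_mul _ _ _
    _ ≤ (Fintype.card ι : ℝ)⁻¹ ^ 2 * (Fintype.card ι * v) := by gcongr
    _ = v / Fintype.card ι := by field_simp

lemma inv_mul_sqrt_le_six_div_mul_sqrt {p M e q c N : ℝ} (hp : 0 ≤ p) (hN : 0 < N) (he : 0 ≤ e)
    (hq : 0 ≤ q) (hc : 0 ≤ c) (hM : M ≤ (2 * e + q) / N) :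
    p⁻¹ * √M ≤ 6 / (√N * p) * √(e + q + c) := by
  have hsqrt : √M ≤ 6 / √N * √(e + q + c) := by
    rw [Real.sqrt_le_left (by positivity), mul_pow, div_pow, Real.sq_sqrt hN.le,
      Real.sq_sqrt (by positivity), div_mul_eq_mul_div]
    exact hM.trans (by gcongr; linarith)
  calc p⁻¹ * √M ≤ p⁻¹ * (6 / √N * √(e + q + c)) := by gcongr
    _ = 6 / (√N * p) * √(e + q + c) := by ring

theorem stmt19_general {d : ℕ} {Ω : Type*} [MeasurableSpace Ω] (P : Measure Ω)
    [IsProbabilityMeasure P]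
    (g : EuclideanSpace ℝ (Fin d) → ℝ) (hg : Measurable g)
    (σ μ : ℝ) (hσ : 0 < σ)
    (p pσ : ℝ)
    (hp : p = ∫ x in {y | g y ≤ 0}, gaussD d x)
    (hpσ : pσ = ∫ x, Fsig g σ μ x * gaussD d x)
    {N : ℕ} (hN : 0 < N)
    (X : Fin N → Ω → EuclideanSpace ℝ (Fin d))
    (Y Z : Ω → EuclideanSpace ℝ (Fin d))
    (hXmeas : ∀ i, Measurable (X i)) (hZmeas : Measurable Z)
    (hindep : iIndepFun X P)
    (hXlaw : ∀ i, Measure.map (X i) P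
      = volume.withDensity (fun x => ENNReal.ofReal (Fsig g σ μ x * gaussD d x / pσ)))
    (hZlaw : Measure.map Z P = volume.withDensity (fun x => ENNReal.ofReal (gaussD d x))) :
    p⁻¹ * Real.sqrt (∫ ω, ((N : ℝ)⁻¹ * ∑ i,
        (if g (X i ω) ≤ 0 then
          gaussD d (X i ω) / (Fsig g σ μ (X i ω) * gaussD d (X i ω) / pσ) else 0)
        - p) ^ 2 ∂P)
      ≤ 6 / (Real.sqrt N * p) * Real.sqrt (Real.exp (-μ / σ)
          + (P {ω | 0 < g (Z ω) ∧ g (Z ω) < 2 * μ}).toReal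
          + Real.exp (-2 * μ / σ) / σ ^ 2
            * ∫ ω, (if g (X ⟨0, hN⟩ ω) ≤ 0 then
                (g (X ⟨0, hN⟩ ω) - g (Y ω)) ^ 2 else 0) ∂P) := by
  have hρ := measurable_gaussD d
  have hρ0 : ∀ x, 0 ≤ gaussD d x := fun x => (gaussD_pos d x).le
  have hρ1 : ∫ x, gaussD d x = 1 :=
    integral_eq_one_of_map_eq_withDensity hZmeas.aemeasurable hρ hρ0 hZlaw
  have hpσpos : 0 < pσ := pos_of_map_eq_withDensity_smoothedDensity
    (hXmeas ⟨0, hN⟩).aemeasurable hg hρ hρ0 hpσ (hXlaw _)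
  have hq := measureReal_preimage_eq_setIntegral hZmeas hρ hρ0 hZlaw
    (s := {x | 0 < g x ∧ g x < 2 * μ})
    ((measurableSet_lt measurable_const hg).inter (measurableSet_lt hg measurable_const))
  have : Nonempty (Fin N) := ⟨⟨0, hN⟩⟩
  have hmse := integral_sq_mean_sub_le (P := P)
    (Y := fun i ω => importanceWeight (gaussD d) g σ μ pσ (X i ω))
    (fun i => memLp_importanceWeight_comp (hXmeas i) hg hρ (gaussD_pos d) hσ hpσpos)
    (fun i j hij => (hindep.indepFun hij).comp (measurable_importanceWeight hρ hg)
      (measurable_importanceWeight hρ hg))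
    (fun i => (integral_importanceWeight_comp (hXmeas i) hg hρ (gaussD_pos d) hpσpos
      (hXlaw i)).trans hp.symm)
    (fun i => variance_importanceWeight_comp_le (hXmeas i) hg hρ (gaussD_pos d) hρ1 hσ hpσ
      (hXlaw i))
  rw [Fintype.card_fin, ← hq] at hmse
  have hp0 : 0 ≤ p := hp ▸ setIntegral_nonneg (measurableSet_le hg measurable_const)
    fun x _ => hρ0 x
  exact inv_mul_sqrt_le_six_div_mul_sqrt hp0 (Nat.cast_pos.mpr hN) (Real.exp_pos _).le
    measureReal_nonneg (by positivity) hmse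

theorem stmt19 {d : ℕ} {Ω : Type*} [MeasurableSpace Ω] (P : Measure Ω)
    [IsProbabilityMeasure P]
    (g : EuclideanSpace ℝ (Fin d) → ℝ) (hg : Measurable g)
    (K σ μ : ℝ) (hσ : 0 < σ) (hμ : 0 < μ)
    (hK : ∀ x y, |g x - g y| ≤ K * ‖x - y‖)
    (p pσ : ℝ)
    (hp : p = ∫ x in {y | g y ≤ 0}, gaussD d x) (hppos : 0 < p)
    (hpσ : pσ = ∫ x, Fsig g σ μ x * gaussD d x)
    {N : ℕ} (hN : 0 < N)
    (X : Fin N → Ω → EuclideanSpace ℝ (Fin d))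
    (Y Z : Ω → EuclideanSpace ℝ (Fin d))
    (hXmeas : ∀ i, Measurable (X i)) (hYmeas : Measurable Y) (hZmeas : Measurable Z)
    (hindep : iIndepFun X P)
    (hXlaw : ∀ i, Measure.map (X i) P
      = volume.withDensity (fun x => ENNReal.ofReal (Fsig g σ μ x * gaussD d x / pσ)))
    (hYlaw : Measure.map Y P
      = volume.withDensity
          (fun x => ENNReal.ofReal (Set.indicator {y | g y ≤ 0} (gaussD d) x / p)))
    (hZlaw : Measure.map Z P = volume.withDensity (fun x => ENNReal.ofReal (gaussD d x)))
    (hL2 : Integrable (fun ω => g (X ⟨0, hN⟩ ω) ^ 2) P) :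
    p⁻¹ * Real.sqrt (∫ ω, ((N : ℝ)⁻¹ * ∑ i,
        (if g (X i ω) ≤ 0 then
          gaussD d (X i ω) / (Fsig g σ μ (X i ω) * gaussD d (X i ω) / pσ) else 0)
        - p) ^ 2 ∂P)
      ≤ 6 / (Real.sqrt N * p) * Real.sqrt (Real.exp (-μ / σ)
          + (P {ω | 0 < g (Z ω) ∧ g (Z ω) < 2 * μ}).toReal
          + Real.exp (-2 * μ / σ) / σ ^ 2
            * ∫ ω, (if g (X ⟨0, hN⟩ ω) ≤ 0 then
                (g (X ⟨0, hN⟩ ω) - g (Y ω)) ^ 2 else 0) ∂P) :=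
  stmt19_general P g hg σ μ hσ p pσ hp hpσ hN X Y Z hXmeas hZmeas hindep hXlaw hZlaw
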